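/- Let K be a positive semidefinite n×n complex matrix with Tr(K) = 1 (a density matrix), and let H be a Hermitian n×n complex matrix. Define S(K) = ∑_l η(λ_l(K)), where λ_l(K) are the eigenvalues of K with multiplicity and η(t) = −t log t (η(0) = 0). Then S(K) − Re(Tr(K·H)) ≤ log Tr(exp(−H)), where exp is the matrix exponential and Tr(exp(−H)) is a positive real number. -/

import Mathlib

open scoped ComplexOrder

/-- The entropy function `η(t) = −t log t` (with `η(0) = 0`). -/
noncomputable def eta (t : ℝ) : ℝ := -(t * Real.log t)

/-- The von Neumann entropy `S(K) = ∑_l η(λ_l(K))` of a Hermitian matrix `K`, where the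
`λ_l(K)` are the eigenvalues with multiplicity (junk value `0` for non-Hermitian matrices). -/
noncomputable def vnEntropy {n : Type*} [Fintype n] [DecidableEq n] (K : Matrix n n ℂ) : ℝ :=
  if hK : K.IsHermitian then ∑ i, eta (hK.eigenvalues i) else 0

/-!
Diagonalize `K = ∑ pᵢ |aᵢ⟩⟨aᵢ|` and `-H = ∑ νⱼ |bⱼ⟩⟨bⱼ|`. The matrix `Pᵢⱼ = |⟨aᵢ, bⱼ⟩|²` is
doubly stochastic and `Tr(K(-H)) = ∑ pᵢ yᵢ` with `y = Pν`. The Gibbs inequality gives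
`S(K) + ∑ pᵢ yᵢ ≤ log ∑ exp yᵢ`, and Jensen's inequality for `exp` along the rows of `P`,
summed using its column sums, gives `∑ exp yᵢ ≤ ∑ exp νⱼ = Tr e^{-H}`.
-/

open Finset Matrix Real

lemma eta_eq_negMulLog : eta = negMulLog := negMulLog_eq_neg.symm

lemma negMulLog_add_mul_log_le {p q : ℝ} (hp : 0 ≤ p) (hq : 0 < q) :
    negMulLog p + p * log q ≤ q - p := by
  rcases hp.eq_or_lt with rfl | hp
  · simpa using hq.le
  have := log_le_sub_one_of_pos (div_pos hq hp)
  rw [log_div hq.ne' hp.ne'] at this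
  calc negMulLog p + p * log q = p * (log q - log p) := by rw [negMulLog]; ring
    _ ≤ p * (q / p - 1) := by gcongr
    _ = q - p := by field_simp

/-- The negative entropy and log-sum-exp are Legendre dual; this is the easy half. -/
lemma sum_negMulLog_add_dotProduct_le_log_sum_exp {ι : Type*} [Fintype ι] {p : ι → ℝ}
    (hp : ∀ i, 0 ≤ p i) (hp_sum : ∑ i, p i = 1) (y : ι → ℝ) :
    ∑ i, negMulLog (p i) + p ⬝ᵥ y ≤ log (∑ i, exp (y i)) := by
  have hne : (univ : Finset ι).Nonempty := nonempty_of_sum_ne_zero (hp_sum ▸ one_ne_zero)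
  set Z := ∑ i, exp (y i)
  have hZ : 0 < Z := sum_pos (fun i _ => exp_pos _) hne
  -- compare `p` with the Gibbs distribution `exp yᵢ / Z`; both sum to `1`
  have key : ∀ i, negMulLog (p i) + p i * (y i - log Z) ≤ exp (y i) / Z - p i := fun i => by
    simpa [log_div (exp_pos _).ne' hZ.ne'] using
      negMulLog_add_mul_log_le (hp i) (div_pos (exp_pos (y i)) hZ)
  have := sum_le_sum fun i (_ : i ∈ univ) => key i
  rw [sum_sub_distrib, ← sum_div, div_self hZ.ne', hp_sum] at this
  simp only [mul_sub, sum_add_distrib, sum_sub_distrib, ← sum_mul, hp_sum] at this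
  simp only [dotProduct]
  linarith

lemma sum_apply_mulVec_le_of_mem_doublyStochastic {n : Type*} [Fintype n] [DecidableEq n]
    {P : Matrix n n ℝ} (hP : P ∈ doublyStochastic ℝ n) {f : ℝ → ℝ} (hf : ConvexOn ℝ Set.univ f)
    (x : n → ℝ) : ∑ i, f ((P *ᵥ x) i) ≤ ∑ i, f (x i) := by
  obtain ⟨hnonneg, hrow, -⟩ := mem_doublyStochastic_iff_sum.mp hP
  calc ∑ i, f ((P *ᵥ x) i) ≤ ∑ i, (P *ᵥ (f ∘ x)) i := sum_le_sum fun i _ =>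
        hf.map_sum_le (fun j _ => hnonneg i j) (hrow i) (fun j _ => Set.mem_univ _)
    _ = ∑ i, f (x i) := sum_mulVec_of_mem_doublyStochastic hP

namespace Matrix
variable {𝕜 n : Type*} [RCLike 𝕜] [Fintype n]

lemma mul_conjTranspose_apply_self (W : Matrix n n 𝕜) (i : n) :
    (W * Wᴴ) i i = ((∑ j, ‖W i j‖ ^ 2 : ℝ) : 𝕜) := by
  simp only [mul_apply, conjTranspose_apply, RCLike.star_def, RCLike.mul_conj]
  push_cast
  rfl

variable [DecidableEq n]

lemma map_norm_sq_mem_doublyStochastic {W : Matrix n n 𝕜} (hW : W ∈ unitaryGroup n 𝕜) :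
    W.map (‖·‖ ^ 2) ∈ doublyStochastic ℝ n := by
  rw [mem_unitaryGroup_iff, star_eq_conjTranspose] at hW
  have hW' : Wᴴ * Wᴴᴴ = 1 := by
    rw [conjTranspose_conjTranspose]; exact mul_eq_one_comm.mp hW
  refine mem_doublyStochastic_iff_sum.mpr ⟨fun i j => sq_nonneg _, fun i => ?_, fun j => ?_⟩
  · have := mul_conjTranspose_apply_self W i
    rw [hW, one_apply_eq] at this
    exact_mod_cast this.symm
  · have := mul_conjTranspose_apply_self Wᴴ j
    rw [hW', one_apply_eq] at this
    simp only [conjTranspose_apply, norm_star] at this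
    exact_mod_cast this.symm

lemma trace_diagonal_mul_mul_diagonal_mul_conjTranspose (d e : n → ℝ) (W : Matrix n n 𝕜) :
    (diagonal (RCLike.ofReal ∘ d) * W * diagonal (RCLike.ofReal ∘ e) * Wᴴ).trace =
      ((d ⬝ᵥ (W.map (‖·‖ ^ 2) *ᵥ e) : ℝ) : 𝕜) := by
  simp only [trace, diag, mul_apply (M := _ * _) (N := Wᴴ), mul_diagonal, diagonal_mul,
    conjTranspose_apply, dotProduct, mulVec, map_apply, mul_sum]
  push_cast
  refine sum_congr rfl fun i _ => sum_congr rfl fun j _ => ?_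
  rw [← RCLike.mul_conj]
  simp only [Function.comp_apply, RCLike.star_def]
  ring

namespace IsHermitian
variable {A B : Matrix n n 𝕜}

/-- The transition probabilities `|⟨a_i, b_j⟩|²` between the eigenbases of `A` and `B`. -/
noncomputable def eigenvectorOverlap (hA : A.IsHermitian) (hB : B.IsHermitian) : Matrix n n ℝ :=
  ((hA.eigenvectorUnitary : Matrix n n 𝕜)ᴴ * hB.eigenvectorUnitary).map (‖·‖ ^ 2)

lemma eigenvectorOverlap_mem_doublyStochastic (hA : A.IsHermitian) (hB : B.IsHermitian) :
    hA.eigenvectorOverlap hB ∈ doublyStochastic ℝ n :=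
  map_norm_sq_mem_doublyStochastic <|
    mul_mem (by simpa [star_eq_conjTranspose] using Unitary.star_mem hA.eigenvectorUnitary.2)
      hB.eigenvectorUnitary.2

lemma trace_mul_eq (hA : A.IsHermitian) (hB : B.IsHermitian) :
    (A * B).trace =
      ((hA.eigenvalues ⬝ᵥ (hA.eigenvectorOverlap hB *ᵥ hB.eigenvalues) : ℝ) : 𝕜) := by
  rw [eigenvectorOverlap, ← trace_diagonal_mul_mul_diagonal_mul_conjTranspose]
  conv_lhs => rw [hA.spectral_theorem, hB.spectral_theorem]
  simp only [Unitary.conjStarAlgAut_apply, Matrix.mul_assoc, star_eq_conjTranspose,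
    conjTranspose_mul, conjTranspose_conjTranspose]
  rw [trace_mul_comm]
  simp only [Matrix.mul_assoc]

lemma trace_exp (hA : A.IsHermitian) :
    (NormedSpace.exp A).trace = ∑ i, ((Real.exp (hA.eigenvalues i) : ℝ) : 𝕜) := by
  set U := hA.eigenvectorUnitary
  have hconj : NormedSpace.exp A = (U : Matrix n n 𝕜) *
      NormedSpace.exp (diagonal (RCLike.ofReal ∘ hA.eigenvalues)) * star (U : Matrix n n 𝕜) := by
    conv_lhs => rw [hA.spectral_theorem, Unitary.conjStarAlgAut_apply]
    simpa using exp_units_conj (Unitary.toUnits U) (diagonal (RCLike.ofReal ∘ hA.eigenvalues))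
  rw [hconj, trace_mul_cycle, Unitary.coe_star_mul_self, one_mul, exp_diagonal, trace_diagonal]
  refine sum_congr rfl fun i _ => ?_
  rw [Pi.exp_def, Real.exp_eq_exp_ℝ]
  exact (NormedSpace.algebraMap_exp_comm _).symm

end IsHermitian

end Matrix

/-- The inequality part of the finite-dimensional variational principle (11.1):
for a density matrix `K` and Hermitian `H`, `S(K) − Tr(K·H) ≤ log Tr(e^{−H})`. -/
theorem variational_principle_inequality {n : Type*} [Fintype n] [DecidableEq n]
    (K H : Matrix n n ℂ) (hK : K.PosSemidef) (htr : K.trace = 1) (hH : H.IsHermitian) :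
    vnEntropy K - ((K * H).trace).re ≤ Real.log (((NormedSpace.exp (-H)).trace).re) := by
  have hKh : K.IsHermitian := hK.1
  have hG : (-H).IsHermitian := hH.neg
  set p := hKh.eigenvalues
  set ν := hG.eigenvalues
  set P := hKh.eigenvectorOverlap hG
  have hp_sum : ∑ i, p i = 1 := by
    have := hKh.trace_eq_sum_eigenvalues
    rw [htr, ← RCLike.ofReal_sum, ← RCLike.ofReal_one, RCLike.ofReal_inj] at this
    exact this.symm
  have hne : (univ : Finset n).Nonempty := nonempty_of_sum_ne_zero (hp_sum ▸ one_ne_zero)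
  have h_trace_mul : ((K * H).trace).re = -(p ⬝ᵥ (P *ᵥ ν)) := by
    have := hKh.trace_mul_eq hG
    rw [Matrix.mul_neg, trace_neg, neg_eq_iff_eq_neg] at this
    rw [this, Complex.neg_re]
    rfl
  have h_trace_exp : ((NormedSpace.exp (-H)).trace).re = ∑ j, exp (ν j) := by
    rw [hG.trace_exp, Complex.re_sum]
    rfl
  rw [vnEntropy, dif_pos hKh, eta_eq_negMulLog, h_trace_mul, h_trace_exp, sub_neg_eq_add]
  calc ∑ i, negMulLog (p i) + p ⬝ᵥ (P *ᵥ ν) ≤ log (∑ i, exp ((P *ᵥ ν) i)) :=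
        sum_negMulLog_add_dotProduct_le_log_sum_exp hK.eigenvalues_nonneg hp_sum _
    _ ≤ log (∑ j, exp (ν j)) := log_le_log (sum_pos (fun i _ => exp_pos _) hne) <|
        sum_apply_mulVec_le_of_mem_doublyStochastic
          (hKh.eigenvectorOverlap_mem_doublyStochastic hG) convexOn_exp ν
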